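/- Assume the origin of the system ė = F(e) is locally exponentially stable with constants k₁, λ₁, r₁ > 0 and is globally attractive. Fix λ with 0 < λ < λ₁ and define c(e,t) := |E(e,t)|/(|e| exp(−λ t)) for e ≠ 0. Then for every s ≥ r₁, the supremum c̄(s) := sup { c(e,t) : r₁ ≤ |e| ≤ s, t ≥ 0 } is finite. -/

import Mathlib

/-!
By global attractivity the trajectory from `e₀` enters the ball of radius `r₁ / 2` at some time
`T`. Grönwall's inequality, with the Lipschitz constant of `F` on a compact neighbourhood of that
trajectory, keeps every trajectory starting near `e₀` within `r₁ / 2` of it on `[0, T]`: such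
trajectories are bounded on `[0, T]` and lie in the ball of radius `r₁` at time `T`, after which
local exponential stability makes them decay at rate `λ₁ ≥ λ`. This bounds `|E(e, t)|` by
`C exp (-λ t)` locally uniformly in `e`, and compactness of the annulus `r₁ ≤ |e| ≤ s` makes the
bound uniform there; dividing by `|e| ≥ r₁` bounds `c`.
-/

open Real Set Filter
open scoped RealInnerProductSpace Topology

/-- Euclidean state space ℝⁿ. -/
abbrev Euc (n : ℕ) := EuclideanSpace ℝ (Fin n)

open Metric
open scoped NNReal

theorem IsCompact.exists_forall_of_forall_exists_eventually {X : Type*} [TopologicalSpace X]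
    {K : Set X} (hK : IsCompact K) {P : ℝ → X → Prop} (hP : Monotone P)
    (hloc : ∀ x ∈ K, ∃ C, ∀ᶠ y in 𝓝 x, P C y) : ∃ C, ∀ x ∈ K, P C x := by
  refine hK.induction_on (p := fun s => ∃ C, ∀ x ∈ s, P C x) ⟨0, by simp⟩
    (fun s t hst ⟨C, hC⟩ => ⟨C, fun x hx => hC x (hst hx)⟩)
    (fun s t ⟨C, hC⟩ ⟨D, hD⟩ => ⟨max C D, ?_⟩) (fun x hx => ?_)
  · rintro x (hx | hx)
    · exact hP (le_max_left C D) x (hC x hx)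
    · exact hP (le_max_right C D) x (hD x hx)
  · obtain ⟨C, hC⟩ := hloc x hx
    exact ⟨_, mem_nhdsWithin_of_mem_nhds hC, C, fun y hy => hy⟩

section Gronwall

variable {E : Type*} [NormedAddCommGroup E] [NormedSpace ℝ E] {F : E → E} {K : ℝ≥0}
  {S : Set E} {δ : ℝ} {f g : ℝ → E} {a b : ℝ}

theorem dist_le_of_trajectories_of_lipschitzOnWith_cthickening
    (hF : LipschitzOnWith K F (cthickening δ S))
    (hf : ContinuousOn f (Icc a b)) (hf' : ∀ t ∈ Ico a b, HasDerivWithinAt f (F (f t)) (Ici t) t)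
    (hg : ContinuousOn g (Icc a b)) (hg' : ∀ t ∈ Ico a b, HasDerivWithinAt g (F (g t)) (Ici t) t)
    (hgS : ∀ t ∈ Ico a b, g t ∈ S) (hclose : dist (f a) (g a) * exp (K * (b - a)) < δ) :
    ∀ t ∈ Icc a b, dist (f t) (g t) ≤ dist (f a) (g a) * exp (K * (t - a)) := by
  have gronwall : ∀ c ∈ Icc a b, (∀ u ∈ Ico a c, dist (f u) (g u) ≤ δ) →
      dist (f c) (g c) ≤ dist (f a) (g a) * exp (K * (c - a)) := by
    intro c hc hδ
    have hsub : Ico a c ⊆ Ico a b := Ico_subset_Ico_right hc.2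
    exact dist_le_of_trajectories_ODE_of_mem (v := fun _ => F) (s := fun _ => cthickening δ S)
      (fun _ _ => hF) (hf.mono (Icc_subset_Icc_right hc.2)) (fun u hu => hf' u (hsub hu))
      (fun u hu => mem_cthickening_of_dist_le _ _ _ _ (hgS u (hsub hu)) (hδ u hu))
      (hg.mono (Icc_subset_Icc_right hc.2)) (fun u hu => hg' u (hsub hu))
      (fun u hu => self_subset_cthickening _ (hgS u (hsub hu))) le_rfl c (right_mem_Icc.2 hc.1)
  have hlt : ∀ c ∈ Icc a b, dist (f a) (g a) * exp (K * (c - a)) < δ := fun c hc =>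
    lt_of_le_of_lt (by gcongr; exact hc.2) hclose
  -- Were the trajectories ever `δ` apart, Grönwall up to the first such time gives a contradiction.
  have hstay : ∀ t ∈ Icc a b, dist (f t) (g t) < δ := by
    by_contra! hexit
    have hexits : IsCompact {t | t ∈ Icc a b ∧ δ ≤ dist (f t) (g t)} :=
      isCompact_Icc.of_isClosed_subset ((continuous_dist.comp_continuousOn
        (hf.prodMk hg)).preimage_isClosed_of_isClosed isClosed_Icc isClosed_Ici) fun _ ht => ht.1
    obtain ⟨τ, ⟨hτ, hτδ⟩, hτmin⟩ := hexits.exists_isLeast hexit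
    have hbefore : ∀ u ∈ Ico a τ, dist (f u) (g u) ≤ δ := fun u hu =>
      (not_le.1 fun h => hu.2.not_ge (hτmin ⟨⟨hu.1, hu.2.le.trans hτ.2⟩, h⟩)).le
    exact (gronwall τ hτ hbefore).not_gt (lt_of_lt_of_le (hlt τ hτ) hτδ)
  exact fun t ht => gronwall t ht fun u hu => (hstay u ⟨hu.1, hu.2.le.trans ht.2⟩).le

end Gronwall

section Flow

variable {E : Type*} [NormedAddCommGroup E] [NormedSpace ℝ E]

structure IsForwardFlow (F : E → E) (Φ : E → ℝ → E) : Prop where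
  map_zero : ∀ e, Φ e 0 = e
  hasDerivWithinAt : ∀ e t, 0 ≤ t → HasDerivWithinAt (Φ e) (F (Φ e t)) (Ici 0) t

variable {F : E → E} {Φ : E → ℝ → E} {k ν r μ : ℝ}

namespace IsForwardFlow

theorem continuousOn (hΦ : IsForwardFlow F Φ) (e : E) : ContinuousOn (Φ e) (Ici 0) :=
  fun t ht => (hΦ.hasDerivWithinAt e t ht).continuousWithinAt

theorem hasDerivWithinAt_Ici (hΦ : IsForwardFlow F Φ) (e : E) {t : ℝ} (ht : 0 ≤ t) :
    HasDerivWithinAt (Φ e) (F (Φ e t)) (Ici t) t :=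
  (hΦ.hasDerivWithinAt e t ht).mono (Ici_subset_Ici.2 ht)

theorem map_add (hΦ : IsForwardFlow F Φ) (hF : LocallyLipschitz F) (e : E) {s t : ℝ}
    (hs : 0 ≤ s) (ht : 0 ≤ t) : Φ e (s + t) = Φ (Φ e s) t := by
  have hshift : ContinuousOn (fun u => Φ e (s + u)) (Icc 0 t) :=
    (hΦ.continuousOn e).comp (by fun_prop) fun u hu => add_nonneg hs hu.1
  have hrestart : ContinuousOn (Φ (Φ e s)) (Icc 0 t) :=
    (hΦ.continuousOn _).mono Icc_subset_Ici_self
  have hcompact : IsCompact ((fun u => Φ e (s + u)) '' Icc 0 t ∪ Φ (Φ e s) '' Icc 0 t) :=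
    (isCompact_Icc.image_of_continuousOn hshift).union
      (isCompact_Icc.image_of_continuousOn hrestart)
  obtain ⟨K, hK⟩ := hF.locallyLipschitzOn.exists_lipschitzOnWith_of_compact hcompact
  refine ODE_solution_unique_of_mem_Icc_right (v := fun _ => F) (fun _ _ => hK) hshift
    (fun u hu => ?_) (fun u hu => Or.inl ⟨u, Ico_subset_Icc_self hu, rfl⟩) hrestart
    (fun u hu => hΦ.hasDerivWithinAt_Ici _ hu.1)
    (fun u hu => Or.inr ⟨u, Ico_subset_Icc_self hu, rfl⟩) (by simp [hΦ.map_zero])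
    (right_mem_Icc.2 ht)
  have := (hΦ.hasDerivWithinAt e (s + u) (add_nonneg hs hu.1)).scomp_of_eq u
    ((hasDerivAt_id u).const_add s).hasDerivWithinAt (fun w hw => add_nonneg hs (hu.1.trans hw)) rfl
  rwa [one_smul] at this

theorem exists_forall_dist_lt [ProperSpace E] (hΦ : IsForwardFlow F Φ) (hF : LocallyLipschitz F)
    (e₀ : E) {T δ : ℝ} (hδ : 0 < δ) :
    ∃ ε > 0, ∀ e, dist e e₀ < ε → ∀ t ∈ Icc 0 T, dist (Φ e t) (Φ e₀ t) < δ := by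
  have hcompact : IsCompact (cthickening δ (Φ e₀ '' Icc 0 T)) :=
    (isCompact_Icc.image_of_continuousOn ((hΦ.continuousOn e₀).mono Icc_subset_Ici_self)).cthickening
  obtain ⟨K, hK⟩ := hF.locallyLipschitzOn.exists_lipschitzOnWith_of_compact hcompact
  refine ⟨δ / exp (K * T), by positivity, fun e he t ht => ?_⟩
  have hclose : dist e e₀ * exp (K * (T - 0)) < δ := by
    rwa [sub_zero, ← lt_div_iff₀ (exp_pos _)]
  have := dist_le_of_trajectories_of_lipschitzOnWith_cthickening hK
    ((hΦ.continuousOn e).mono Icc_subset_Ici_self) (fun u hu => hΦ.hasDerivWithinAt_Ici e hu.1)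
    ((hΦ.continuousOn e₀).mono Icc_subset_Ici_self) (fun u hu => hΦ.hasDerivWithinAt_Ici e₀ hu.1)
    (fun u hu => ⟨u, Ico_subset_Icc_self hu, rfl⟩) (by simpa [hΦ.map_zero] using hclose) t ht
  rw [hΦ.map_zero, hΦ.map_zero] at this
  refine this.trans_lt (lt_of_le_of_lt ?_ hclose)
  gcongr
  exact ht.2

theorem norm_le_mul_exp_of_norm_le (hΦ : IsForwardFlow F Φ) (hF : LocallyLipschitz F)
    (hk : 0 ≤ k) (hstable : ∀ e t, 0 ≤ t → ‖e‖ ≤ r → ‖Φ e t‖ ≤ k * exp (-ν * t) * ‖e‖)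
    (hμ : μ ≤ ν) {e : E} {T t : ℝ} (hT : 0 ≤ T) (hTt : T ≤ t) (heT : ‖Φ e T‖ ≤ r) :
    ‖Φ e t‖ ≤ k * r * exp (μ * T) * exp (-μ * t) := by
  obtain ⟨u, hu, rfl⟩ : ∃ u, 0 ≤ u ∧ t = T + u := ⟨t - T, sub_nonneg.2 hTt, by ring⟩
  have hexp : exp (-μ * u) = exp (μ * T) * exp (-μ * (T + u)) := by
    rw [← exp_add]; ring_nf
  calc ‖Φ e (T + u)‖ = ‖Φ (Φ e T) u‖ := by rw [hΦ.map_add hF e hT hu]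
    _ ≤ k * exp (-ν * u) * ‖Φ e T‖ := hstable _ u hu heT
    _ ≤ k * exp (-μ * u) * r := by gcongr
    _ = k * r * exp (μ * T) * exp (-μ * (T + u)) := by rw [hexp]; ring

theorem exists_eventually_norm_le_mul_exp [ProperSpace E] (hΦ : IsForwardFlow F Φ)
    (hF : LocallyLipschitz F) (hk : 0 ≤ k) (hr : 0 < r)
    (hstable : ∀ e t, 0 ≤ t → ‖e‖ ≤ r → ‖Φ e t‖ ≤ k * exp (-ν * t) * ‖e‖)
    (hμ : 0 ≤ μ) (hμν : μ ≤ ν) {e₀ : E} (hattr : Tendsto (fun t => ‖Φ e₀ t‖) atTop (𝓝 0)) :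
    ∃ C, ∀ᶠ e in 𝓝 e₀, ∀ t, 0 ≤ t → ‖Φ e t‖ ≤ C * exp (-μ * t) := by
  obtain ⟨T, hT₀, hT⟩ : ∃ T, ‖Φ e₀ T‖ < r / 2 ∧ 0 ≤ T :=
    ((hattr.eventually (gt_mem_nhds (half_pos hr))).and (eventually_ge_atTop 0)).exists
  obtain ⟨R, hR⟩ := isCompact_Icc.exists_bound_of_continuousOn
    ((hΦ.continuousOn e₀).mono (Icc_subset_Ici_self : Icc 0 T ⊆ Ici 0))
  obtain ⟨ε, hε, hnear⟩ := hΦ.exists_forall_dist_lt hF e₀ (T := T) (half_pos hr)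
  refine ⟨max (R + r / 2) (k * r) * exp (μ * T),
    eventually_of_mem (ball_mem_nhds e₀ hε) fun e he t ht => ?_⟩
  have hshadow : ∀ t ∈ Icc 0 T, ‖Φ e t‖ ≤ ‖Φ e₀ t‖ + r / 2 := fun t ht =>
    (norm_le_norm_add_norm_sub' _ _).trans
      (add_le_add le_rfl ((dist_eq_norm _ _).symm.trans_le (hnear e he t ht).le))
  rcases le_total t T with htT | hTt
  · have hgrowth : 1 ≤ exp (μ * T) * exp (-μ * t) := by
      rw [← exp_add]; exact one_le_exp (by nlinarith)
    calc ‖Φ e t‖ ≤ R + r / 2 := (hshadow t ⟨ht, htT⟩).trans (by gcongr; exact hR t ⟨ht, htT⟩)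
      _ ≤ (R + r / 2) * (exp (μ * T) * exp (-μ * t)) :=
        le_mul_of_one_le_right (by linarith [(norm_nonneg _).trans (hR 0 ⟨le_rfl, hT⟩)]) hgrowth
      _ ≤ max (R + r / 2) (k * r) * exp (μ * T) * exp (-μ * t) := by
        rw [← mul_assoc]; gcongr; exact le_max_left _ _
  · have heT : ‖Φ e T‖ ≤ r := by linarith [hshadow T ⟨hT, le_rfl⟩]
    calc ‖Φ e t‖ ≤ k * r * exp (μ * T) * exp (-μ * t) :=
          hΦ.norm_le_mul_exp_of_norm_le hF hk hstable hμν hT hTt heT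
      _ ≤ max (R + r / 2) (k * r) * exp (μ * T) * exp (-μ * t) := by
        gcongr; exact le_max_right _ _

end IsForwardFlow

end Flow

theorem sup_c_finite
    {n : ℕ}
    (F : Euc n → Euc n) (hF : ContDiff ℝ 1 F)
    (Efl : Euc n → ℝ → Euc n)
    (hinit : ∀ e, Efl e 0 = e)
    (hflow : ∀ e t, 0 ≤ t → HasDerivWithinAt (Efl e) (F (Efl e t)) (Ici 0) t)
    -- local exponential stability with constants k₁, λ₁, r₁
    (k1 lam1 r1 : ℝ) (hk1 : 0 < k1) (hr1 : 0 < r1)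
    (hLES : ∀ e t, 0 ≤ t → ‖e‖ ≤ r1 → ‖Efl e t‖ ≤ k1 * exp (-lam1 * t) * ‖e‖)
    -- global attractivity
    (hGA : ∀ e, Tendsto (fun t => ‖Efl e t‖) atTop (𝓝 0))
    -- fix 0 < λ < λ₁
    (lam : ℝ) (hlam : 0 < lam) (hlamlt : lam < lam1) :
    ∀ s, r1 ≤ s →
      BddAbove {y : ℝ | ∃ e : Euc n, ∃ t : ℝ, r1 ≤ ‖e‖ ∧ ‖e‖ ≤ s ∧ 0 ≤ t ∧
        y = ‖Efl e t‖ / (‖e‖ * exp (-lam * t))} := by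
  intro s _
  have hannulus : IsCompact {e : Euc n | r1 ≤ ‖e‖ ∧ ‖e‖ ≤ s} :=
    (isCompact_closedBall 0 s).of_isClosed_subset (isClosed_Icc.preimage continuous_norm)
      fun e he => mem_closedBall_zero_iff.2 he.2
  obtain ⟨C, hC⟩ := hannulus.exists_forall_of_forall_exists_eventually
    (P := fun C e => ∀ t, 0 ≤ t → ‖Efl e t‖ ≤ C * exp (-lam * t))
    (fun C D hCD e hC t ht => (hC t ht).trans (by gcongr))
    fun e _ => IsForwardFlow.exists_eventually_norm_le_mul_exp ⟨hinit, hflow⟩ hF.locallyLipschitz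
      hk1.le hr1 hLES hlam.le hlamlt.le (hGA e)
  refine ⟨C / r1, ?_⟩
  rintro _ ⟨e, t, hre, hes, ht, rfl⟩
  have hbound := hC e ⟨hre, hes⟩ t ht
  have hC₀ : 0 ≤ C := nonneg_of_mul_nonneg_left ((norm_nonneg _).trans hbound) (exp_pos _)
  rw [div_le_div_iff₀ (mul_pos (hr1.trans_le hre) (exp_pos _)) hr1]
  calc ‖Efl e t‖ * r1 ≤ C * exp (-lam * t) * ‖e‖ := mul_le_mul hbound hre hr1.le (by positivity)
    _ = C * (‖e‖ * exp (-lam * t)) := by ring
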